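/- arXiv:1201.5565 — 3 statements merged into one kernel-verified Lean document; each statement's English description precedes it below -/
import Mathlib

section
/- Let M be an almost cosymplectic (κ,μ)-space of dimension ≥ 5 with κ < 0 such that κ and μ only vary in the direction of ξ. Then the Riemann curvature tensor of M can be written as R = -κ R₃ - R_{5,2} - μ R₆, where R₃(X,Y)Z = η(X)η(Z)Y - η(Y)η(Z)X + g(X,Z)η(Y)ξ - g(Y,Z)η(X)ξ, R_{5,2}(X,Y)Z = g(φhY,Z)φhX - g(φhX,Z)φhY, and R₆(X,Y)Z = η(X)η(Z)hY - η(Y)η(Z)hX + g(hX,Z)η(Y)ξ - g(hY,Z)η(X)ξ. -/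
open scoped InnerProductSpace

variable {V : Type*} [NormedAddCommGroup V] [InnerProductSpace ℝ V]

/-- R₁(X,Y)Z = g(Y,Z)X - g(X,Z)Y -/
noncomputable def R1 (X Y Z : V) : V := ⟪Y, Z⟫_ℝ • X - ⟪X, Z⟫_ℝ • Y

/-- R₂(X,Y)Z = g(X,φZ)φY - g(Y,φZ)φX + 2g(X,φY)φZ -/
noncomputable def R2 (φ : V →ₗ[ℝ] V) (X Y Z : V) : V :=
  ⟪X, φ Z⟫_ℝ • φ Y - ⟪Y, φ Z⟫_ℝ • φ X + (2 * ⟪X, φ Y⟫_ℝ) • φ Z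

/-- R₃(X,Y)Z = η(X)η(Z)Y - η(Y)η(Z)X + g(X,Z)η(Y)ξ - g(Y,Z)η(X)ξ -/
noncomputable def R3 (η : V →ₗ[ℝ] ℝ) (ξ : V) (X Y Z : V) : V :=
  (η X * η Z) • Y - (η Y * η Z) • X + (⟪X, Z⟫_ℝ * η Y) • ξ - (⟪Y, Z⟫_ℝ * η X) • ξ

/-- R₄(X,Y)Z = g(Y,Z)hX - g(X,Z)hY + g(hY,Z)X - g(hX,Z)Y -/
noncomputable def R4 (h : V →ₗ[ℝ] V) (X Y Z : V) : V :=
  ⟪Y, Z⟫_ℝ • h X - ⟪X, Z⟫_ℝ • h Y + ⟪h Y, Z⟫_ℝ • X - ⟪h X, Z⟫_ℝ • Y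

/-- R_{5,1}(X,Y)Z = g(hY,Z)hX - g(hX,Z)hY -/
noncomputable def R51 (h : V →ₗ[ℝ] V) (X Y Z : V) : V :=
  ⟪h Y, Z⟫_ℝ • h X - ⟪h X, Z⟫_ℝ • h Y

/-- R_{5,2}(X,Y)Z = g(φhY,Z)φhX - g(φhX,Z)φhY -/
noncomputable def R52 (φ h : V →ₗ[ℝ] V) (X Y Z : V) : V :=
  ⟪φ (h Y), Z⟫_ℝ • φ (h X) - ⟪φ (h X), Z⟫_ℝ • φ (h Y)

/-- R₆(X,Y)Z = η(X)η(Z)hY - η(Y)η(Z)hX + g(hX,Z)η(Y)ξ - g(hY,Z)η(X)ξ -/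
noncomputable def R6 (η : V →ₗ[ℝ] ℝ) (ξ : V) (h : V →ₗ[ℝ] V) (X Y Z : V) : V :=
  (η X * η Z) • h Y - (η Y * η Z) • h X + (⟪h X, Z⟫_ℝ * η Y) • ξ - (⟪h Y, Z⟫_ℝ * η X) • ξ

/-- R₇(X,Y)Z = g(Y,Z)φhX - g(X,Z)φhY + g(φhY,Z)X - g(φhX,Z)Y -/
noncomputable def R7 (φ h : V →ₗ[ℝ] V) (X Y Z : V) : V :=
  ⟪Y, Z⟫_ℝ • φ (h X) - ⟪X, Z⟫_ℝ • φ (h Y) + ⟪φ (h Y), Z⟫_ℝ • X - ⟪φ (h X), Z⟫_ℝ • Y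

/-- R₈(X,Y)Z = η(X)η(Z)φhY - η(Y)η(Z)φhX + g(φhX,Z)η(Y)ξ - g(φhY,Z)η(X)ξ -/
noncomputable def R8 (η : V →ₗ[ℝ] ℝ) (ξ : V) (φ h : V →ₗ[ℝ] V) (X Y Z : V) : V :=
  (η X * η Z) • φ (h Y) - (η Y * η Z) • φ (h X)
    + (⟪φ (h X), Z⟫_ℝ * η Y) • ξ - (⟪φ (h Y), Z⟫_ℝ * η X) • ξ

/-!
Both sides are trilinear, so it suffices to compare them on the spanning set formed by `ξ` and the
eigenvectors of `h` for `±√(-κ)`. With `ξ` in some slot, both sides are given by the `(κ,μ)`-nullity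
condition. On eigenvectors `φ h = ±√(-κ) φ`, so `R_{5,2}` becomes `κ` times terms `⟪φ X, Z⟫ φ Y`,
and these match Endo's formulas because `φ` swaps the two eigenspaces, which are orthogonal.
-/

structure AlmostContactMetric (φ : V →ₗ[ℝ] V) (ξ : V) (η : V →ₗ[ℝ] ℝ) : Prop where
  eta_xi : η ξ = 1
  phi_phi : ∀ X : V, φ (φ X) = -X + η X • ξ
  inner_phi_phi : ∀ X Y : V, ⟪φ X, φ Y⟫_ℝ = ⟪X, Y⟫_ℝ - η X * η Y

namespace AlmostContactMetric

variable {φ : V →ₗ[ℝ] V} {ξ : V} {η : V →ₗ[ℝ] ℝ}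

theorem xi_ne_zero (hs : AlmostContactMetric φ ξ η) : ξ ≠ 0 := by
  rintro rfl
  simpa using hs.eta_xi

theorem eta_phi_smul_xi (hs : AlmostContactMetric φ ξ η) (X : V) : η (φ X) • ξ = η X • φ ξ := by
  have h := hs.phi_phi (φ X)
  rw [hs.phi_phi X, map_add, map_neg, map_smul] at h
  exact (add_left_cancel h).symm

theorem phi_xi (hs : AlmostContactMetric φ ξ η) : φ ξ = 0 := by
  have hφφξ : φ (φ ξ) = 0 := by rw [hs.phi_phi, hs.eta_xi, one_smul, neg_add_cancel]
  have h := hs.eta_phi_smul_xi ξ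
  rw [hs.eta_xi, one_smul] at h
  have h2 : η (φ ξ) • φ ξ = 0 := by rw [← map_smul, h, hφφξ]
  rcases smul_eq_zero.1 h2 with h0 | h0
  · rw [← h, h0, zero_smul]
  · exact h0

theorem eta_phi (hs : AlmostContactMetric φ ξ η) (X : V) : η (φ X) = 0 := by
  have h := hs.eta_phi_smul_xi X
  rw [hs.phi_xi, smul_zero, smul_eq_zero] at h
  exact h.resolve_right hs.xi_ne_zero

theorem inner_xi (hs : AlmostContactMetric φ ξ η) (X : V) : ⟪X, ξ⟫_ℝ = η X := by
  have h := hs.inner_phi_phi X ξ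
  rw [hs.phi_xi, inner_zero_right, hs.eta_xi] at h
  linarith

theorem inner_phi_left (hs : AlmostContactMetric φ ξ η) (X Y : V) : ⟪φ X, Y⟫_ℝ = -⟪X, φ Y⟫_ℝ := by
  have h := hs.inner_phi_phi X (φ Y)
  rw [hs.phi_phi, inner_add_right, inner_neg_right, real_inner_smul_right, hs.inner_xi,
    hs.eta_phi, hs.eta_phi] at h
  linarith

end AlmostContactMetric

theorem LinearMap.IsSymmetric.inner_eq_zero_of_apply_eq_smul {𝕜 E : Type*} [RCLike 𝕜]
    [NormedAddCommGroup E] [InnerProductSpace 𝕜 E] {T : E →ₗ[𝕜] E} (hT : T.IsSymmetric)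
    {a b : 𝕜} (hab : a ≠ b) {x y : E} (hx : T x = a • x) (hy : T y = b • y) : ⟪x, y⟫_𝕜 = 0 :=
  (hT.orthogonalFamily_eigenspaces.isOrtho hab).inner_eq
    (Module.End.mem_eigenspace_iff.2 hx) (Module.End.mem_eigenspace_iff.2 hy)

theorem apply_eq_neg_smul_of_anticomm {R M : Type*} [Ring R] [AddCommGroup M] [Module R M]
    {h φ : M →ₗ[R] M} (hanti : ∀ x : M, h (φ x) = -φ (h x)) {a : R} {x : M}
    (hx : h x = a • x) : h (φ x) = (-a) • φ x := by
  rw [hanti, hx, map_smul, neg_smul]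

section Eigenvectors

variable {h : V →ₗ[ℝ] V} {a : ℝ} {X Y : V}

theorem inner_phi_eq_zero_of_apply_eq_smul {φ : V →ₗ[ℝ] V} (hsym : h.IsSymmetric)
    (hanti : ∀ X : V, h (φ X) = -φ (h X)) (ha : a ≠ 0) (hX : h X = a • X) (hY : h Y = a • Y) :
    ⟪φ X, Y⟫_ℝ = 0 :=
  hsym.inner_eq_zero_of_apply_eq_smul (by contrapose! ha; linarith)
    (apply_eq_neg_smul_of_anticomm hanti hX) hY

theorem eta_eq_zero_of_apply_eq_smul {φ : V →ₗ[ℝ] V} {ξ : V} {η : V →ₗ[ℝ] ℝ}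
    (hs : AlmostContactMetric φ ξ η) (hsym : h.IsSymmetric) (hhξ : h ξ = 0) (ha : a ≠ 0)
    (hX : h X = a • X) : η X = 0 := by
  rw [← hs.inner_xi]
  exact hsym.inner_eq_zero_of_apply_eq_smul ha hX (by rw [hhξ, zero_smul])

end Eigenvectors

section CurvatureModel

variable (φ h : V →ₗ[ℝ] V) (ξ : V) (η : V →ₗ[ℝ] ℝ) (κ μ : ℝ)

noncomputable def curvatureModel : V →ₗ[ℝ] V →ₗ[ℝ] V →ₗ[ℝ] V :=
  LinearMap.mk₂ ℝ
    (fun X Y =>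
      { toFun := fun Z => -κ • R3 η ξ X Y Z - R52 φ h X Y Z - μ • R6 η ξ h X Y Z
        map_add' := fun Z Z' => by
          simp only [R3, R52, R6, map_add, inner_add_right]
          module
        map_smul' := fun c Z => by
          simp only [R3, R52, R6, map_smul, real_inner_smul_right, smul_eq_mul,
            RingHom.id_apply]
          module })
    (fun X X' Y => by
      ext Z
      simp only [LinearMap.coe_mk, AddHom.coe_mk, LinearMap.add_apply, R3, R52, R6, map_add,
        inner_add_left]
      module)
    (fun c X Y => by
      ext Z
      simp only [LinearMap.coe_mk, AddHom.coe_mk, LinearMap.smul_apply, R3, R52, R6, map_smul,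
        real_inner_smul_left, smul_eq_mul]
      module)
    (fun X Y Y' => by
      ext Z
      simp only [LinearMap.coe_mk, AddHom.coe_mk, LinearMap.add_apply, R3, R52, R6, map_add,
        inner_add_left]
      module)
    (fun c X Y => by
      ext Z
      simp only [LinearMap.coe_mk, AddHom.coe_mk, LinearMap.smul_apply, R3, R52, R6, map_smul,
        real_inner_smul_left, smul_eq_mul]
      module)

variable {φ h ξ η κ μ}

@[simp]
theorem curvatureModel_apply (X Y Z : V) :
    curvatureModel φ h ξ η κ μ X Y Z
      = -κ • R3 η ξ X Y Z - R52 φ h X Y Z - μ • R6 η ξ h X Y Z :=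
  rfl

theorem curvatureModel_swap (X Y Z : V) :
    curvatureModel φ h ξ η κ μ X Y Z = -curvatureModel φ h ξ η κ μ Y X Z := by
  simp only [curvatureModel_apply, R3, R52, R6]
  module

theorem curvatureModel_apply_xi_left (hs : AlmostContactMetric φ ξ η) (hhξ : h ξ = 0)
    (Y Z : V) :
    curvatureModel φ h ξ η κ μ ξ Y Z
      = κ • (⟪Y, Z⟫_ℝ • ξ - η Z • Y) + μ • (⟪h Y, Z⟫_ℝ • ξ - η Z • h Y) := by
  simp only [curvatureModel_apply, R3, R52, R6, hs.eta_xi, hhξ, map_zero, inner_zero_left,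
    real_inner_comm Z ξ, hs.inner_xi]
  module

theorem curvatureModel_apply_xi_right (hs : AlmostContactMetric φ ξ η) (hsym : h.IsSymmetric)
    (hhξ : h ξ = 0) (X Y : V) :
    curvatureModel φ h ξ η κ μ X Y ξ
      = κ • (η Y • X - η X • Y) + μ • (η Y • h X - η X • h Y) := by
  have hηh (X : V) : η (h X) = 0 := by rw [← hs.inner_xi, hsym, hhξ, inner_zero_right]
  simp only [curvatureModel_apply, R3, R52, R6, hs.eta_xi, hs.inner_xi, hηh, hs.eta_phi]
  module

theorem curvatureModel_apply_of_apply_eq_smul (hs : AlmostContactMetric φ ξ η)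
    (hsym : h.IsSymmetric) (hhξ : h ξ = 0) {a b c : ℝ} (ha : a ≠ 0) (hb : b ≠ 0) (hc : c ≠ 0)
    {X Y Z : V} (hX : h X = a • X) (hY : h Y = b • Y) (hZ : h Z = c • Z) :
    curvatureModel φ h ξ η κ μ X Y Z
      = (a * b) • (⟪φ X, Z⟫_ℝ • φ Y - ⟪φ Y, Z⟫_ℝ • φ X) := by
  simp only [curvatureModel_apply, R3, R52, R6, eta_eq_zero_of_apply_eq_smul hs hsym hhξ ha hX,
    eta_eq_zero_of_apply_eq_smul hs hsym hhξ hb hY, eta_eq_zero_of_apply_eq_smul hs hsym hhξ hc hZ,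
    hX, hY, map_smul, real_inner_smul_left]
  module

end CurvatureModel

/-- In the field names, `pos`/`neg` says that the corresponding argument is an eigenvector of `h`
for `l`/`-l`. -/
structure EndoFormulas (R : V →ₗ[ℝ] V →ₗ[ℝ] V →ₗ[ℝ] V) (φ h : V →ₗ[ℝ] V) (κ l : ℝ) : Prop where
  pos_pos_neg : ∀ X Y Z : V, h X = l • X → h Y = l • Y → h Z = (-l) • Z →
    R X Y Z = κ • (⟪φ Y, Z⟫_ℝ • φ X - ⟪φ X, Z⟫_ℝ • φ Y)
  neg_neg_pos : ∀ X Y Z : V, h X = (-l) • X → h Y = (-l) • Y → h Z = l • Z →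
    R X Y Z = κ • (⟪φ Y, Z⟫_ℝ • φ X - ⟪φ X, Z⟫_ℝ • φ Y)
  pos_neg_neg : ∀ X Y Z : V, h X = l • X → h Y = (-l) • Y → h Z = (-l) • Z →
    R X Y Z = (-κ * ⟪X, φ Z⟫_ℝ) • φ Y
  pos_neg_pos : ∀ X Y Z : V, h X = l • X → h Y = (-l) • Y → h Z = l • Z →
    R X Y Z = (-κ * ⟪Z, φ Y⟫_ℝ) • φ X
  pos_pos_pos : ∀ X Y Z : V, h X = l • X → h Y = l • Y → h Z = l • Z → R X Y Z = 0
  neg_neg_neg : ∀ X Y Z : V, h X = (-l) • X → h Y = (-l) • Y → h Z = (-l) • Z → R X Y Z = 0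

namespace EndoFormulas

variable {R : V →ₗ[ℝ] V →ₗ[ℝ] V →ₗ[ℝ] V} {φ h : V →ₗ[ℝ] V} {ξ : V} {η : V →ₗ[ℝ] ℝ}
  {κ μ l : ℝ}

theorem apply_eq_curvatureModel_of_pos (hE : EndoFormulas R φ h κ l)
    (hs : AlmostContactMetric φ ξ η) (hsym : h.IsSymmetric) (hhξ : h ξ = 0)
    (hanti : ∀ X : V, h (φ X) = -φ (h X)) (hl : l ≠ 0) (hl2 : l * l = -κ) {X Y Z : V}
    (hX : h X = l • X) (hY : h Y = l • Y ∨ h Y = (-l) • Y) (hZ : h Z = l • Z ∨ h Z = (-l) • Z) :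
    R X Y Z = curvatureModel φ h ξ η κ μ X Y Z := by
  obtain rfl : κ = -(l * l) := by linarith
  have hl' : -l ≠ 0 := neg_ne_zero.2 hl
  rcases hY with hY | hY <;> rcases hZ with hZ | hZ
  · rw [hE.pos_pos_pos X Y Z hX hY hZ,
      curvatureModel_apply_of_apply_eq_smul hs hsym hhξ hl hl hl hX hY hZ,
      inner_phi_eq_zero_of_apply_eq_smul hsym hanti hl hX hZ,
      inner_phi_eq_zero_of_apply_eq_smul hsym hanti hl hY hZ]
    simp
  · rw [hE.pos_pos_neg X Y Z hX hY hZ,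
      curvatureModel_apply_of_apply_eq_smul hs hsym hhξ hl hl hl' hX hY hZ]
    module
  · rw [hE.pos_neg_pos X Y Z hX hY hZ,
      curvatureModel_apply_of_apply_eq_smul hs hsym hhξ hl hl' hl hX hY hZ,
      inner_phi_eq_zero_of_apply_eq_smul hsym hanti hl hX hZ, real_inner_comm]
    module
  · rw [hE.pos_neg_neg X Y Z hX hY hZ,
      curvatureModel_apply_of_apply_eq_smul hs hsym hhξ hl hl' hl' hX hY hZ,
      inner_phi_eq_zero_of_apply_eq_smul hsym hanti hl' hY hZ,
      ← neg_neg ⟪X, φ Z⟫_ℝ, ← hs.inner_phi_left]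
    module

theorem apply_eq_curvatureModel (hE : EndoFormulas R φ h κ l)
    (hs : AlmostContactMetric φ ξ η) (hsym : h.IsSymmetric) (hhξ : h ξ = 0)
    (hanti : ∀ X : V, h (φ X) = -φ (h X)) (hRskew : ∀ X Y Z : V, R X Y Z = -R Y X Z)
    (hl : l ≠ 0) (hl2 : l * l = -κ) {X Y Z : V} (hX : h X = l • X ∨ h X = (-l) • X)
    (hY : h Y = l • Y ∨ h Y = (-l) • Y) (hZ : h Z = l • Z ∨ h Z = (-l) • Z) :
    R X Y Z = curvatureModel φ h ξ η κ μ X Y Z := by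
  rcases hX with hX | hX
  · exact hE.apply_eq_curvatureModel_of_pos hs hsym hhξ hanti hl hl2 hX hY hZ
  rcases hY with hY | hY
  · rw [hRskew, curvatureModel_swap,
      hE.apply_eq_curvatureModel_of_pos hs hsym hhξ hanti hl hl2 hY (Or.inr hX) hZ]
  obtain rfl : κ = -(l * l) := by linarith
  have hl' : -l ≠ 0 := neg_ne_zero.2 hl
  rcases hZ with hZ | hZ
  · rw [hE.neg_neg_pos X Y Z hX hY hZ,
      curvatureModel_apply_of_apply_eq_smul hs hsym hhξ hl' hl' hl hX hY hZ]
    module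
  · rw [hE.neg_neg_neg X Y Z hX hY hZ,
      curvatureModel_apply_of_apply_eq_smul hs hsym hhξ hl' hl' hl' hX hY hZ,
      inner_phi_eq_zero_of_apply_eq_smul hsym hanti hl' hX hZ,
      inner_phi_eq_zero_of_apply_eq_smul hsym hanti hl' hY hZ]
    simp

end EndoFormulas

theorem LinearMap.ext_on₃ {R M₁ M₂ M₃ N : Type*} [CommSemiring R] [AddCommMonoid M₁]
    [Module R M₁] [AddCommMonoid M₂] [Module R M₂] [AddCommMonoid M₃] [Module R M₃]
    [AddCommMonoid N] [Module R N] {s₁ : Set M₁} {s₂ : Set M₂} {s₃ : Set M₃}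
    (h₁ : Submodule.span R s₁ = ⊤) (h₂ : Submodule.span R s₂ = ⊤) (h₃ : Submodule.span R s₃ = ⊤)
    {f g : M₁ →ₗ[R] M₂ →ₗ[R] M₃ →ₗ[R] N} (h : ∀ x ∈ s₁, ∀ y ∈ s₂, ∀ z ∈ s₃, f x y z = g x y z) :
    f = g :=
  LinearMap.ext_on h₁ fun x hx =>
    LinearMap.ext_on h₂ fun y hy => LinearMap.ext_on h₃ fun z hz => h x hx y hy z hz

theorem span_eigenvectors_union_singleton_eq_top {K M : Type*} [CommRing K] [AddCommGroup M]
    [Module K M] {h : M →ₗ[K] M} {l : K} {ξ : M} {η : M → K}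
    (hdecomp : ∀ X : M, ∃ Xp Xm : M, h Xp = l • Xp ∧ h Xm = (-l) • Xm ∧ X = Xp + Xm + η X • ξ) :
    Submodule.span K ({X | h X = l • X} ∪ {X | h X = (-l) • X} ∪ {ξ}) = ⊤ := by
  refine Submodule.eq_top_iff'.2 fun X => ?_
  obtain ⟨Xp, Xm, hXp, hXm, hX⟩ := hdecomp X
  rw [hX]
  refine add_mem (add_mem ?_ ?_) (Submodule.smul_mem _ _ ?_) <;>
    exact Submodule.subset_span (by simp [hXp, hXm])

theorem cosymplectic_curvature_writing_general
    (φ h : V →ₗ[ℝ] V) (ξ : V) (η : V →ₗ[ℝ] ℝ)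
    (R : V →ₗ[ℝ] V →ₗ[ℝ] V →ₗ[ℝ] V) (κ μ : ℝ)
    (hκ : κ < 0)
    -- almost contact metric structure
    (hηξ : η ξ = 1)
    (hφ2 : ∀ X : V, φ (φ X) = -X + η X • ξ)
    (hmetric : ∀ X Y : V, ⟪φ X, φ Y⟫_ℝ = ⟪X, Y⟫_ℝ - η X * η Y)
    -- properties of h
    (hsym : ∀ X Y : V, ⟪h X, Y⟫_ℝ = ⟪X, h Y⟫_ℝ)
    (hhξ : h ξ = 0)
    (hanti : ∀ X : V, h (φ X) = -φ (h X))
    -- the (κ,μ) curvature condition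
    (hRXYξ : ∀ X Y : V, R X Y ξ = κ • (η Y • X - η X • Y) + μ • (η Y • h X - η X • h Y))
    -- formula (eq-R-xi-x-y) with ν = 0
    (hRξ : ∀ X Y : V, R ξ X Y = κ • (⟪X, Y⟫_ℝ • ξ - η Y • X) + μ • (⟪h X, Y⟫_ℝ • ξ - η Y • h X))
    (hRskew : ∀ X Y Z : V, R X Y Z = -R Y X Z)
    -- the eigenspace decomposition TM = D(λ) ⊕ D(-λ) ⊕ ⟨ξ⟩, λ = √(-κ)
    (hdecomp : ∀ X : V, ∃ Xp Xm : V, h Xp = Real.sqrt (-κ) • Xp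
        ∧ h Xm = (-Real.sqrt (-κ)) • Xm ∧ X = Xp + Xm + η X • ξ)
    -- Endo's formulas on the eigenspaces
    (hE1 : ∀ X Y Z : V, h X = Real.sqrt (-κ) • X → h Y = Real.sqrt (-κ) • Y →
        h Z = (-Real.sqrt (-κ)) • Z →
        R X Y Z = κ • (⟪φ Y, Z⟫_ℝ • φ X - ⟪φ X, Z⟫_ℝ • φ Y))
    (hE2 : ∀ X Y Z : V, h X = (-Real.sqrt (-κ)) • X → h Y = (-Real.sqrt (-κ)) • Y →
        h Z = Real.sqrt (-κ) • Z →
        R X Y Z = κ • (⟪φ Y, Z⟫_ℝ • φ X - ⟪φ X, Z⟫_ℝ • φ Y))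
    (hE3 : ∀ X Y Z : V, h X = Real.sqrt (-κ) • X → h Y = (-Real.sqrt (-κ)) • Y →
        h Z = (-Real.sqrt (-κ)) • Z →
        R X Y Z = (-κ * ⟪X, φ Z⟫_ℝ) • φ Y)
    (hE4 : ∀ X Y Z : V, h X = Real.sqrt (-κ) • X → h Y = (-Real.sqrt (-κ)) • Y →
        h Z = Real.sqrt (-κ) • Z →
        R X Y Z = (-κ * ⟪Z, φ Y⟫_ℝ) • φ X)
    (hE5 : ∀ X Y Z : V, h X = Real.sqrt (-κ) • X → h Y = Real.sqrt (-κ) • Y →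
        h Z = Real.sqrt (-κ) • Z → R X Y Z = 0)
    (hE6 : ∀ X Y Z : V, h X = (-Real.sqrt (-κ)) • X → h Y = (-Real.sqrt (-κ)) • Y →
        h Z = (-Real.sqrt (-κ)) • Z → R X Y Z = 0) :
    ∀ X Y Z : V, R X Y Z
      = -κ • R3 η ξ X Y Z - R52 φ h X Y Z - μ • R6 η ξ h X Y Z := by
  have hs : AlmostContactMetric φ ξ η := ⟨hηξ, hφ2, hmetric⟩
  have hE : EndoFormulas R φ h κ (Real.sqrt (-κ)) := ⟨hE1, hE2, hE3, hE4, hE5, hE6⟩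
  have hl : Real.sqrt (-κ) ≠ 0 := (Real.sqrt_pos.2 (neg_pos.2 hκ)).ne'
  have hl2 : Real.sqrt (-κ) * Real.sqrt (-κ) = -κ := Real.mul_self_sqrt (neg_nonneg.2 hκ.le)
  have hspan := span_eigenvectors_union_singleton_eq_top hdecomp
  have hR : R = curvatureModel φ h ξ η κ μ := by
    refine LinearMap.ext_on₃ hspan hspan hspan fun X hX Y hY Z hZ => ?_
    rcases hZ with hZ | rfl
    · rcases hX with hX | rfl
      · rcases hY with hY | rfl
        · exact hE.apply_eq_curvatureModel hs hsym hhξ hanti hRskew hl hl2 hX hY hZ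
        · rw [hRskew, hRξ, curvatureModel_swap, curvatureModel_apply_xi_left hs hhξ]
      · rw [hRξ, curvatureModel_apply_xi_left hs hhξ]
    · rw [hRXYξ, curvatureModel_apply_xi_right hs hsym hhξ]
  intro X Y Z
  rw [hR, curvatureModel_apply]

/-- An almost cosymplectic (κ,μ)-space of dimension ≥ 5 with κ < 0,
with κ, μ varying only in the direction of ξ, has curvature tensor
R = -κ R₃ - R_{5,2} - μ R₆. -/
theorem cosymplectic_curvature_writing
    (φ h : V →ₗ[ℝ] V) (ξ : V) (η : V →ₗ[ℝ] ℝ)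
    (R : V →ₗ[ℝ] V →ₗ[ℝ] V →ₗ[ℝ] V) (κ μ : ℝ)
    {n : ℕ} (hn : 2 ≤ n) (hdim : Module.finrank ℝ V = 2 * n + 1)
    (hκ : κ < 0)
    -- almost contact metric structure
    (hηξ : η ξ = 1)
    (hφ2 : ∀ X : V, φ (φ X) = -X + η X • ξ)
    (hmetric : ∀ X Y : V, ⟪φ X, φ Y⟫_ℝ = ⟪X, Y⟫_ℝ - η X * η Y)
    -- properties of h
    (hsym : ∀ X Y : V, ⟪h X, Y⟫_ℝ = ⟪X, h Y⟫_ℝ)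
    (hhξ : h ξ = 0)
    (hanti : ∀ X : V, h (φ X) = -φ (h X))
    -- the (κ,μ) curvature condition
    (hRXYξ : ∀ X Y : V, R X Y ξ = κ • (η Y • X - η X • Y) + μ • (η Y • h X - η X • h Y))
    -- formula (eq-R-xi-x-y) with ν = 0
    (hRξ : ∀ X Y : V, R ξ X Y = κ • (⟪X, Y⟫_ℝ • ξ - η Y • X) + μ • (⟪h X, Y⟫_ℝ • ξ - η Y • h X))
    (hRskew : ∀ X Y Z : V, R X Y Z = -R Y X Z)
    -- the eigenspace decomposition TM = D(λ) ⊕ D(-λ) ⊕ ⟨ξ⟩, λ = √(-κ)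
    (hdecomp : ∀ X : V, ∃ Xp Xm : V, h Xp = Real.sqrt (-κ) • Xp
        ∧ h Xm = (-Real.sqrt (-κ)) • Xm ∧ X = Xp + Xm + η X • ξ)
    -- Endo's formulas on the eigenspaces
    (hE1 : ∀ X Y Z : V, h X = Real.sqrt (-κ) • X → h Y = Real.sqrt (-κ) • Y →
        h Z = (-Real.sqrt (-κ)) • Z →
        R X Y Z = κ • (⟪φ Y, Z⟫_ℝ • φ X - ⟪φ X, Z⟫_ℝ • φ Y))
    (hE2 : ∀ X Y Z : V, h X = (-Real.sqrt (-κ)) • X → h Y = (-Real.sqrt (-κ)) • Y →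
        h Z = Real.sqrt (-κ) • Z →
        R X Y Z = κ • (⟪φ Y, Z⟫_ℝ • φ X - ⟪φ X, Z⟫_ℝ • φ Y))
    (hE3 : ∀ X Y Z : V, h X = Real.sqrt (-κ) • X → h Y = (-Real.sqrt (-κ)) • Y →
        h Z = (-Real.sqrt (-κ)) • Z →
        R X Y Z = (-κ * ⟪X, φ Z⟫_ℝ) • φ Y)
    (hE4 : ∀ X Y Z : V, h X = Real.sqrt (-κ) • X → h Y = (-Real.sqrt (-κ)) • Y →
        h Z = Real.sqrt (-κ) • Z →
        R X Y Z = (-κ * ⟪Z, φ Y⟫_ℝ) • φ X)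
    (hE5 : ∀ X Y Z : V, h X = Real.sqrt (-κ) • X → h Y = Real.sqrt (-κ) • Y →
        h Z = Real.sqrt (-κ) • Z → R X Y Z = 0)
    (hE6 : ∀ X Y Z : V, h X = (-Real.sqrt (-κ)) • X → h Y = (-Real.sqrt (-κ)) • Y →
        h Z = (-Real.sqrt (-κ)) • Z → R X Y Z = 0) :
    ∀ X Y Z : V, R X Y Z
      = -κ • R3 η ξ X Y Z - R52 φ h X Y Z - μ • R6 η ξ h X Y Z :=
  cosymplectic_curvature_writing_general φ h ξ η R κ μ hκ hηξ hφ2 hmetric hsym hhξ hanti hRXYξ hRξ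
    hRskew hdecomp hE1 hE2 hE3 hE4 hE5 hE6
end

section
/- There is no almost contact metric manifold of dimension ≥ 5 with almost cosymplectic structure whose curvature tensor admits a writing R = f₁R₁ + ... + f₈R₈ (generalized (κ,μ,ν)-space form) with f₁ - f₃ < 0, assuming: (a) every such manifold, viewed as a (f₁-f₃, f₄-f₆, f₇-f₈)-space, has curvature R = -(f₁-f₃)R₃ - R_{5,2} - (f₄-f₆)R₆ - (f₇-f₈)R₈, and (b) the writing of the curvature tensor as a combination of R₁, R₂, R₃, R₄, R_{5,1}, R_{5,2}, R₆, R₇, R₈ is unique. (The contradiction arises since the two writings force f₅ = 0 and f₅ = 1 for the R_{5,1} and R_{5,2} coefficients.) -/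
open scoped InnerProductSpace

variable {V : Type*} [NormedAddCommGroup V] [InnerProductSpace ℝ V]

theorem no_cosymplectic_space_form_general
    (φ h : V →ₗ[ℝ] V) (ξ : V) (η : V →ₗ[ℝ] ℝ)
    (R : V → V → V → V)
    (f₁ f₂ f₃ f₄ f₅ f₆ f₇ f₈ : ℝ)
    -- the generalized (κ,μ,ν)-space form writing, with R₅ = R_{5,1} - R_{5,2}
    (hR : ∀ X Y Z : V, R X Y Z
        = f₁ • R1 X Y Z + f₂ • R2 φ X Y Z + f₃ • R3 η ξ X Y Z + f₄ • R4 h X Y Z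
          + f₅ • (R51 h X Y Z - R52 φ h X Y Z) + f₆ • R6 η ξ h X Y Z
          + f₇ • R7 φ h X Y Z + f₈ • R8 η ξ φ h X Y Z)
    -- hypothesis (a)
    (ha : ∀ X Y Z : V, R X Y Z
        = -(f₁ - f₃) • R3 η ξ X Y Z - R52 φ h X Y Z - (f₄ - f₆) • R6 η ξ h X Y Z
          - (f₇ - f₈) • R8 η ξ φ h X Y Z)
    -- hypothesis (b): uniqueness of the writing
    (hb : ∀ c₁ c₂ c₃ c₄ c₅₁ c₅₂ c₆ c₇ c₈ d₁ d₂ d₃ d₄ d₅₁ d₅₂ d₆ d₇ d₈ : ℝ,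
        (∀ X Y Z : V,
          c₁ • R1 X Y Z + c₂ • R2 φ X Y Z + c₃ • R3 η ξ X Y Z + c₄ • R4 h X Y Z
            + c₅₁ • R51 h X Y Z + c₅₂ • R52 φ h X Y Z + c₆ • R6 η ξ h X Y Z
            + c₇ • R7 φ h X Y Z + c₈ • R8 η ξ φ h X Y Z
          = d₁ • R1 X Y Z + d₂ • R2 φ X Y Z + d₃ • R3 η ξ X Y Z + d₄ • R4 h X Y Z
            + d₅₁ • R51 h X Y Z + d₅₂ • R52 φ h X Y Z + d₆ • R6 η ξ h X Y Z
            + d₇ • R7 φ h X Y Z + d₈ • R8 η ξ φ h X Y Z) →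
        c₁ = d₁ ∧ c₂ = d₂ ∧ c₃ = d₃ ∧ c₄ = d₄ ∧ c₅₁ = d₅₁ ∧ c₅₂ = d₅₂
          ∧ c₆ = d₆ ∧ c₇ = d₇ ∧ c₈ = d₈) :
    False := by
  -- The two writings of R give R_{5,1}, R_{5,2} coefficients (f₅, -f₅) and (0, -1).
  obtain ⟨-, -, -, -, hR51, hR52, -⟩ :=
    hb f₁ f₂ f₃ f₄ f₅ (-f₅) f₆ f₇ f₈ 0 0 (-(f₁ - f₃)) 0 0 (-1) (-(f₄ - f₆)) 0 (-(f₇ - f₈))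
      fun X Y Z => by
        linear_combination (norm := module) (hR X Y Z).symm.trans (ha X Y Z)
  linarith

/-- There is no almost cosymplectic generalized (κ,μ,ν)-space form
M(f₁,…,f₈) of dimension ≥ 5 with κ = f₁ - f₃ < 0, assuming (a) the curvature of such a
space, as a (f₁-f₃, f₄-f₆, f₇-f₈)-space, equals -(f₁-f₃)R₃ - R_{5,2} - (f₄-f₆)R₆ - (f₇-f₈)R₈,
and (b) the writing of the curvature as a combination of R₁, R₂, R₃, R₄, R_{5,1}, R_{5,2},
R₆, R₇, R₈ is unique. -/
theorem no_cosymplectic_space_form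
    (φ h : V →ₗ[ℝ] V) (ξ : V) (η : V →ₗ[ℝ] ℝ)
    (R : V → V → V → V)
    (f₁ f₂ f₃ f₄ f₅ f₆ f₇ f₈ : ℝ)
    {n : ℕ} (hn : 2 ≤ n) (hdim : Module.finrank ℝ V = 2 * n + 1)
    -- almost contact metric structure
    (hηξ : η ξ = 1)
    (hφ2 : ∀ X : V, φ (φ X) = -X + η X • ξ)
    (hmetric : ∀ X Y : V, ⟪φ X, φ Y⟫_ℝ = ⟪X, Y⟫_ℝ - η X * η Y)
    -- properties of h
    (hsym : ∀ X Y : V, ⟪h X, Y⟫_ℝ = ⟪X, h Y⟫_ℝ)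
    (hhξ : h ξ = 0)
    (hanti : ∀ X : V, h (φ X) = -φ (h X))
    -- κ = f₁ - f₃ < 0
    (hκ : f₁ - f₃ < 0)
    -- the generalized (κ,μ,ν)-space form writing, with R₅ = R_{5,1} - R_{5,2}
    (hR : ∀ X Y Z : V, R X Y Z
        = f₁ • R1 X Y Z + f₂ • R2 φ X Y Z + f₃ • R3 η ξ X Y Z + f₄ • R4 h X Y Z
          + f₅ • (R51 h X Y Z - R52 φ h X Y Z) + f₆ • R6 η ξ h X Y Z
          + f₇ • R7 φ h X Y Z + f₈ • R8 η ξ φ h X Y Z)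
    -- hypothesis (a)
    (ha : ∀ X Y Z : V, R X Y Z
        = -(f₁ - f₃) • R3 η ξ X Y Z - R52 φ h X Y Z - (f₄ - f₆) • R6 η ξ h X Y Z
          - (f₇ - f₈) • R8 η ξ φ h X Y Z)
    -- hypothesis (b): uniqueness of the writing
    (hb : ∀ c₁ c₂ c₃ c₄ c₅₁ c₅₂ c₆ c₇ c₈ d₁ d₂ d₃ d₄ d₅₁ d₅₂ d₆ d₇ d₈ : ℝ,
        (∀ X Y Z : V,
          c₁ • R1 X Y Z + c₂ • R2 φ X Y Z + c₃ • R3 η ξ X Y Z + c₄ • R4 h X Y Z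
            + c₅₁ • R51 h X Y Z + c₅₂ • R52 φ h X Y Z + c₆ • R6 η ξ h X Y Z
            + c₇ • R7 φ h X Y Z + c₈ • R8 η ξ φ h X Y Z
          = d₁ • R1 X Y Z + d₂ • R2 φ X Y Z + d₃ • R3 η ξ X Y Z + d₄ • R4 h X Y Z
            + d₅₁ • R51 h X Y Z + d₅₂ • R52 φ h X Y Z + d₆ • R6 η ξ h X Y Z
            + d₇ • R7 φ h X Y Z + d₈ • R8 η ξ φ h X Y Z) →
        c₁ = d₁ ∧ c₂ = d₂ ∧ c₃ = d₃ ∧ c₄ = d₄ ∧ c₅₁ = d₅₁ ∧ c₅₂ = d₅₂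
          ∧ c₆ = d₆ ∧ c₇ = d₇ ∧ c₈ = d₈) :
    False :=
  no_cosymplectic_space_form_general φ h ξ η R f₁ f₂ f₃ f₄ f₅ f₆ f₇ f₈ hR ha hb
end

section
/- Let M³ be a 3-dimensional almost cosymplectic (resp. almost Kenmotsu) (κ,μ,ν)-space with κ < 0 (resp. κ < -1). Then its Ricci operator satisfies Qξ = 2κξ and QX = (τ/2 - κ)X + (3κ - τ/2)η(X)ξ + μhX + νφhX for every vector field X, where τ is the scalar curvature. -/
open scoped InnerProductSpace

/-!
Putting `Y = ξ` into `R(ξ,X)Y` and comparing the 3-dimensional curvature identity with the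
`(κ,μ,ν)` condition expresses `Q X` through `Q ξ` and `c = ⟪Q ξ, ξ⟫`. Pairing `R(ξ,E)(φE)` with `E`
and `R(ξ,φE)E` with `φE` shows `Q ξ ⊥ E, φE`, so `Q ξ = c ξ`. Finally, tracing `Q` in the
orthonormal φ-basis `{E, φE, ξ}`, where `h` has diagonal `(λ, -λ, 0)` and `φh` has zero diagonal,
gives `τ = (τ + 2κ - 2c) + c`, i.e. `c = 2κ`.
-/

section

variable {V : Type*} [NormedAddCommGroup V] [InnerProductSpace ℝ V]

structure IsAlmostContactMetric (φ : V →ₗ[ℝ] V) (ξ : V) (η : V →ₗ[ℝ] ℝ) : Prop where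
  eta_xi : η ξ = 1
  phi_phi : ∀ X, φ (φ X) = -X + η X • ξ
  inner_phi_phi : ∀ X Y, ⟪φ X, φ Y⟫_ℝ = ⟪X, Y⟫_ℝ - η X * η Y

/-- In dimension 3 the Weyl tensor vanishes, so the curvature tensor `R(X,Y)Z` is this expression
in the Ricci operator `Q` and the scalar curvature `τ`. -/
noncomputable def curvatureOfRicci (Q : V →ₗ[ℝ] V) (τ : ℝ) (X Y Z : V) : V :=
  ⟪Y, Z⟫_ℝ • Q X - ⟪X, Z⟫_ℝ • Q Y + ⟪Q Y, Z⟫_ℝ • X - ⟪Q X, Z⟫_ℝ • Y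
    - (τ / 2) • (⟪Y, Z⟫_ℝ • X - ⟪X, Z⟫_ℝ • Y)

/-- The value of `R(ξ,X)Y` prescribed by the `(κ,μ,ν)` curvature condition. -/
def kappaMuNuCurvature (φ h : V →ₗ[ℝ] V) (ξ : V) (η : V →ₗ[ℝ] ℝ) (κ μ ν : ℝ) (X Y : V) : V :=
  κ • (⟪X, Y⟫_ℝ • ξ - η Y • X) + μ • (⟪h X, Y⟫_ℝ • ξ - η Y • h X)
    + ν • (⟪φ (h X), Y⟫_ℝ • ξ - η Y • φ (h X))

variable {φ h Q : V →ₗ[ℝ] V} {ξ : V} {η : V →ₗ[ℝ] ℝ} {κ μ ν τ : ℝ}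

namespace IsAlmostContactMetric

theorem eta_phi_smul_xi (hc : IsAlmostContactMetric φ ξ η) (X : V) :
    η (φ X) • ξ = η X • φ ξ := by
  have hφφφ := hc.phi_phi (φ X)
  rw [hc.phi_phi X, map_add, map_neg, map_smul] at hφφφ
  linear_combination (norm := module) -hφφφ

theorem phi_xi (hc : IsAlmostContactMetric φ ξ η) : φ ξ = 0 := by
  have hφξ : φ ξ = η (φ ξ) • ξ := by simpa [hc.eta_xi] using (hc.eta_phi_smul_xi ξ).symm
  have hφφξ : φ (φ ξ) = 0 := by rw [hc.phi_phi, hc.eta_xi, one_smul, neg_add_cancel]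
  have hsq : η (φ ξ) * η (φ ξ) = 0 := by
    have hηφ := congrArg (fun v => η (φ v)) hφξ
    simp only [hφφξ, map_zero, map_smul, smul_eq_mul] at hηφ
    exact hηφ.symm
  rw [hφξ, mul_self_eq_zero.mp hsq, zero_smul]

theorem eta_phi (hc : IsAlmostContactMetric φ ξ η) (X : V) : η (φ X) = 0 := by
  have hη := congrArg η (hc.eta_phi_smul_xi X)
  simpa [hc.phi_xi, hc.eta_xi] using hη

theorem inner_xi (hc : IsAlmostContactMetric φ ξ η) (X : V) : ⟪X, ξ⟫_ℝ = η X := by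
  have hξ := hc.inner_phi_phi X ξ
  rw [hc.phi_xi, inner_zero_right, hc.eta_xi, mul_one] at hξ
  linarith

theorem inner_phi_self (hc : IsAlmostContactMetric φ ξ η) (X : V) : ⟪φ X, X⟫_ℝ = 0 := by
  have hφX := hc.inner_phi_phi X (φ X)
  rw [hc.phi_phi, hc.eta_phi, mul_zero, sub_zero, inner_add_right, inner_neg_right,
    real_inner_smul_right, hc.inner_xi, hc.eta_phi, mul_zero, add_zero] at hφX
  linarith [real_inner_comm X (φ X)]

theorem orthonormal_frame (hc : IsAlmostContactMetric φ ξ η) {E : V} (hE : ⟪E, E⟫_ℝ = 1)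
    (hηE : η E = 0) : Orthonormal ℝ ![E, φ E, ξ] := by
  have norm_eq_one {v : V} (hv : ⟪v, v⟫_ℝ = 1) : ‖v‖ = 1 := by
    rw [norm_eq_sqrt_real_inner, hv, Real.sqrt_one]
  have hφE : ‖φ E‖ = 1 := norm_eq_one (by rw [hc.inner_phi_phi, hE, hηE, mul_zero, sub_zero])
  have hξ : ‖ξ‖ = 1 := norm_eq_one (by rw [hc.inner_xi, hc.eta_xi])
  rw [orthonormal_iff_ite]
  intro i j
  fin_cases i <;> fin_cases j <;>
    simp [norm_eq_one hE, hφE, hξ, hc.inner_xi, hc.eta_phi, hηE, hc.inner_phi_self,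
      real_inner_comm (φ E) E, real_inner_comm E ξ, real_inner_comm (φ E) ξ]

end IsAlmostContactMetric

theorem LinearMap.trace_eq_inner_add_inner_add_inner {e₁ e₂ e₃ : V}
    (hon : Orthonormal ℝ ![e₁, e₂, e₃])
    (hspan : ∀ W : V, W = ⟪W, e₁⟫_ℝ • e₁ + ⟪W, e₂⟫_ℝ • e₂ + ⟪W, e₃⟫_ℝ • e₃) (T : V →ₗ[ℝ] V) :
    LinearMap.trace ℝ V T = ⟪e₁, T e₁⟫_ℝ + ⟪e₂, T e₂⟫_ℝ + ⟪e₃, T e₃⟫_ℝ := by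
  have hsp : ⊤ ≤ Submodule.span ℝ (Set.range ![e₁, e₂, e₃]) := by
    intro W _
    rw [Submodule.mem_span_range_iff_exists_fun]
    exact ⟨![⟪W, e₁⟫_ℝ, ⟪W, e₂⟫_ℝ, ⟪W, e₃⟫_ℝ], by simp [Fin.sum_univ_three, ← hspan W]⟩
  rw [LinearMap.trace_eq_sum_inner T (OrthonormalBasis.mk hon hsp)]
  simp [Fin.sum_univ_three]

theorem ricci_apply_eq_of_kappaMuNu (hc : IsAlmostContactMetric φ ξ η)
    (hsym : ∀ X Y : V, ⟪h X, Y⟫_ℝ = ⟪X, h Y⟫_ℝ) (hhξ : h ξ = 0)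
    (hQsym : ∀ X Y : V, ⟪Q X, Y⟫_ℝ = ⟪X, Q Y⟫_ℝ)
    (hR : ∀ X Y : V, curvatureOfRicci Q τ ξ X Y = kappaMuNuCurvature φ h ξ η κ μ ν X Y)
    (X : V) :
    Q X = η X • Q ξ + ⟪X, Q ξ⟫_ℝ • ξ + (τ / 2 + κ - ⟪Q ξ, ξ⟫_ℝ) • X - ((τ / 2 + κ) * η X) • ξ
      + μ • h X + ν • φ (h X) := by
  have hhX : ⟪h X, ξ⟫_ℝ = 0 := by rw [hsym, hhξ, inner_zero_right]
  have hφhX : ⟪φ (h X), ξ⟫_ℝ = 0 := by rw [hc.inner_xi, hc.eta_phi]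
  have hRXξ := hR X ξ
  simp only [curvatureOfRicci, kappaMuNuCurvature, hc.inner_xi ξ, hc.eta_xi, hc.inner_xi X,
    hQsym X ξ, hhX, hφhX] at hRXξ
  linear_combination (norm := module) -hRXξ

theorem inner_ricci_xi_eq_zero (hc : IsAlmostContactMetric φ ξ η)
    (hR : ∀ X Y : V, curvatureOfRicci Q τ ξ X Y = kappaMuNuCurvature φ h ξ η κ μ ν X Y)
    {X Y : V} (hX : ⟪X, X⟫_ℝ = 1) (hXY : ⟪X, Y⟫_ℝ = 0) (hηX : η X = 0) (hηY : η Y = 0) :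
    ⟪Q ξ, Y⟫_ℝ = 0 := by
  have hξX : ⟪ξ, X⟫_ℝ = 0 := by rw [real_inner_comm, hc.inner_xi, hηX]
  have hξY : ⟪ξ, Y⟫_ℝ = 0 := by rw [real_inner_comm, hc.inner_xi, hηY]
  have hRXY := congrArg (⟪·, X⟫_ℝ) (hR X Y)
  simp only [curvatureOfRicci, kappaMuNuCurvature, inner_add_left, inner_sub_left,
    real_inner_smul_left, hX, hXY, hξX, hξY, hηY] at hRXY
  linarith

theorem ricci_xi_eq_of_kappaMuNu (hc : IsAlmostContactMetric φ ξ η)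
    (hsym : ∀ X Y : V, ⟪h X, Y⟫_ℝ = ⟪X, h Y⟫_ℝ) (hhξ : h ξ = 0)
    (hanti : ∀ X : V, h (φ X) = -φ (h X))
    {E : V} {l : ℝ} (hE : h E = l • E) (hEunit : ⟪E, E⟫_ℝ = 1) (hηE : η E = 0)
    (hbasis : ∀ W : V, W = ⟪W, E⟫_ℝ • E + ⟪W, φ E⟫_ℝ • φ E + η W • ξ)
    (hQsym : ∀ X Y : V, ⟪Q X, Y⟫_ℝ = ⟪X, Q Y⟫_ℝ) (hτ : τ = LinearMap.trace ℝ V Q)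
    (hR : ∀ X Y : V, curvatureOfRicci Q τ ξ X Y = kappaMuNuCurvature φ h ξ η κ μ ν X Y) :
    Q ξ = (2 * κ) • ξ := by
  have hQ := ricci_apply_eq_of_kappaMuNu hc hsym hhξ hQsym hR
  have hφE : ⟪φ E, φ E⟫_ℝ = 1 := by rw [hc.inner_phi_phi, hEunit, hηE, mul_zero, sub_zero]
  have hφEE : ⟪φ E, E⟫_ℝ = 0 := hc.inner_phi_self E
  have hEφE : ⟪E, φ E⟫_ℝ = 0 := by rw [real_inner_comm, hφEE]
  have hQξ : Q ξ = ⟪Q ξ, ξ⟫_ℝ • ξ := by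
    have hQξE := inner_ricci_xi_eq_zero hc hR hφE hφEE (hc.eta_phi E) hηE
    have hQξφE := inner_ricci_xi_eq_zero hc hR hEunit hEφE hηE (hc.eta_phi E)
    have hexp := hbasis (Q ξ)
    rwa [hQξE, hQξφE, zero_smul, zero_smul, zero_add, zero_add, ← hc.inner_xi] at hexp
  have htr : τ = ⟪E, Q E⟫_ℝ + ⟪φ E, Q (φ E)⟫_ℝ + ⟪ξ, Q ξ⟫_ℝ := by
    rw [hτ]
    refine LinearMap.trace_eq_inner_add_inner_add_inner (hc.orthonormal_frame hEunit hηE)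
      (fun W => ?_) Q
    rw [hc.inner_xi]
    exact hbasis W
  have hQE : ⟪E, Q E⟫_ℝ = τ / 2 + κ - ⟪Q ξ, ξ⟫_ℝ + μ * l := by
    rw [hQ E]
    simp only [inner_add_right, inner_sub_right, real_inner_smul_right, map_smul, hE, hηE,
      hEunit, hEφE, hc.inner_xi E]
    ring
  have hQφE : ⟪φ E, Q (φ E)⟫_ℝ = τ / 2 + κ - ⟪Q ξ, ξ⟫_ℝ - μ * l := by
    rw [hQ (φ E), hanti, hE]
    simp only [inner_add_right, inner_sub_right, inner_neg_right, real_inner_smul_right,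
      map_smul, map_neg, hc.phi_phi, hc.eta_phi, hηE, hφE, hφEE, hc.inner_xi (φ E)]
    ring
  have hQξξ : ⟪Q ξ, ξ⟫_ℝ = 2 * κ := by linarith [real_inner_comm (Q ξ) ξ]
  rw [hQξ, hQξξ]

end

theorem dim3_ricci_operator_general
    {V : Type*} [NormedAddCommGroup V] [InnerProductSpace ℝ V]
    (φ h Q : V →ₗ[ℝ] V) (ξ : V) (η : V →ₗ[ℝ] ℝ)
    (R : V → V → V → V) (κ μ ν τ l : ℝ)
    -- almost contact metric structure
    (hηξ : η ξ = 1)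
    (hφ2 : ∀ X : V, φ (φ X) = -X + η X • ξ)
    (hmetric : ∀ X Y : V, ⟪φ X, φ Y⟫_ℝ = ⟪X, Y⟫_ℝ - η X * η Y)
    -- properties of h
    (hsym : ∀ X Y : V, ⟪h X, Y⟫_ℝ = ⟪X, h Y⟫_ℝ)
    (hhξ : h ξ = 0)
    (hanti : ∀ X : V, h (φ X) = -φ (h X))
    -- the φ-basis {E, φE, ξ} with hE = λE
    (E : V) (hE : h E = l • E) (hEunit : ⟪E, E⟫_ℝ = 1) (hηE : η E = 0)
    (hbasis : ∀ W : V, W = ⟪W, E⟫_ℝ • E + ⟪W, φ E⟫_ℝ • φ E + η W • ξ)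
    -- Q is symmetric and τ = tr Q
    (hQsym : ∀ X Y : V, ⟪Q X, Y⟫_ℝ = ⟪X, Q Y⟫_ℝ)
    (hτ : τ = LinearMap.trace ℝ V Q)
    -- the curvature identity valid on any Riemannian 3-manifold
    (hR3 : ∀ X Y Z : V, R X Y Z
        = ⟪Y, Z⟫_ℝ • Q X - ⟪X, Z⟫_ℝ • Q Y + ⟪Q Y, Z⟫_ℝ • X - ⟪Q X, Z⟫_ℝ • Y
          - (τ / 2) • (⟪Y, Z⟫_ℝ • X - ⟪X, Z⟫_ℝ • Y))
    -- the (κ,μ,ν) curvature condition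
    (hRξ : ∀ X Y : V, R ξ X Y
        = κ • (⟪X, Y⟫_ℝ • ξ - η Y • X) + μ • (⟪h X, Y⟫_ℝ • ξ - η Y • h X)
          + ν • (⟪φ (h X), Y⟫_ℝ • ξ - η Y • φ (h X))) :
    Q ξ = (2 * κ) • ξ
      ∧ ∀ X : V, Q X = (τ / 2 - κ) • X + ((3 * κ - τ / 2) * η X) • ξ
          + μ • h X + ν • φ (h X) := by
  have hc : IsAlmostContactMetric φ ξ η := ⟨hηξ, hφ2, hmetric⟩
  have hR : ∀ X Y, curvatureOfRicci Q τ ξ X Y = kappaMuNuCurvature φ h ξ η κ μ ν X Y :=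
    fun X Y => (hR3 ξ X Y).symm.trans (hRξ X Y)
  have hQξ := ricci_xi_eq_of_kappaMuNu hc hsym hhξ hanti hE hEunit hηE hbasis hQsym hτ hR
  refine ⟨hQξ, fun X => ?_⟩
  rw [ricci_apply_eq_of_kappaMuNu hc hsym hhξ hQsym hR X, hQξ, real_inner_smul_right,
    real_inner_smul_left, hc.inner_xi, hc.inner_xi, hc.eta_xi]
  module

/-- On a 3-dimensional almost cosymplectic (resp. almost Kenmotsu)
(κ,μ,ν)-space with κ < 0 (resp. κ < -1), the Ricci operator satisfies Qξ = 2κξ and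
QX = (τ/2 - κ)X + (3κ - τ/2)η(X)ξ + μhX + νφhX, where τ is the scalar curvature. -/
theorem dim3_ricci_operator
    {V : Type*} [NormedAddCommGroup V] [InnerProductSpace ℝ V] [FiniteDimensional ℝ V]
    (hdim : Module.finrank ℝ V = 3)
    (φ h Q : V →ₗ[ℝ] V) (ξ : V) (η : V →ₗ[ℝ] ℝ)
    (R : V → V → V → V) (κ μ ν τ l : ℝ)
    -- almost cosymplectic case (κ < 0, λ = √(-κ)) or almost Kenmotsu case (κ < -1, λ = √(-1-κ))
    (hcase : (κ < 0 ∧ l = Real.sqrt (-κ)) ∨ (κ < -1 ∧ l = Real.sqrt (-1 - κ)))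
    -- almost contact metric structure
    (hηξ : η ξ = 1)
    (hφ2 : ∀ X : V, φ (φ X) = -X + η X • ξ)
    (hmetric : ∀ X Y : V, ⟪φ X, φ Y⟫_ℝ = ⟪X, Y⟫_ℝ - η X * η Y)
    -- properties of h
    (hsym : ∀ X Y : V, ⟪h X, Y⟫_ℝ = ⟪X, h Y⟫_ℝ)
    (hhξ : h ξ = 0)
    (hanti : ∀ X : V, h (φ X) = -φ (h X))
    -- the φ-basis {E, φE, ξ} with hE = λE
    (E : V) (hE : h E = l • E) (hEunit : ⟪E, E⟫_ℝ = 1) (hηE : η E = 0)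
    (hbasis : ∀ W : V, W = ⟪W, E⟫_ℝ • E + ⟪W, φ E⟫_ℝ • φ E + η W • ξ)
    -- Q is symmetric and τ = tr Q
    (hQsym : ∀ X Y : V, ⟪Q X, Y⟫_ℝ = ⟪X, Q Y⟫_ℝ)
    (hτ : τ = LinearMap.trace ℝ V Q)
    -- the curvature identity valid on any Riemannian 3-manifold
    (hR3 : ∀ X Y Z : V, R X Y Z
        = ⟪Y, Z⟫_ℝ • Q X - ⟪X, Z⟫_ℝ • Q Y + ⟪Q Y, Z⟫_ℝ • X - ⟪Q X, Z⟫_ℝ • Y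
          - (τ / 2) • (⟪Y, Z⟫_ℝ • X - ⟪X, Z⟫_ℝ • Y))
    -- the (κ,μ,ν) curvature condition
    (hRξ : ∀ X Y : V, R ξ X Y
        = κ • (⟪X, Y⟫_ℝ • ξ - η Y • X) + μ • (⟪h X, Y⟫_ℝ • ξ - η Y • h X)
          + ν • (⟪φ (h X), Y⟫_ℝ • ξ - η Y • φ (h X)))
    (hRskew : ∀ X Y Z : V, R X Y Z = -R Y X Z) :
    Q ξ = (2 * κ) • ξ
      ∧ ∀ X : V, Q X = (τ / 2 - κ) • X + ((3 * κ - τ / 2) * η X) • ξ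
          + μ • h X + ν • φ (h X) :=
  dim3_ricci_operator_general φ h Q ξ η R κ μ ν τ l hηξ hφ2 hmetric hsym hhξ hanti E hE hEunit hηE
    hbasis hQsym hτ hR3 hRξ
end
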